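/- The truncated-variance function V(b) = Var(Z | Z ≤ b), for Z a standard normal random variable, is strictly increasing on ℝ, and V(b) < 1 for every b ≤ 0. In particular, for every p ∈ (0, 1/2), the quantity γ(p) = 1 − V(−c_p) is strictly positive, where c_p > 0 is the unique real with Φ(−c_p) = p. -/

import Mathlib

/-- The standard normal density `φ(t) = exp(-t²/2)/√(2π)`. -/
noncomputable def stdPhi (t : ℝ) : ℝ := Real.exp (-t ^ 2 / 2) / Real.sqrt (2 * Real.pi)

/-- The standard normal CDF `Φ(t) = ∫_{-∞}^t φ(s) ds`. -/
noncomputable def stdCDF (t : ℝ) : ℝ := ∫ s in Set.Iic t, stdPhi s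

/-- The variance of a standard normal truncated from above at `b`:
`V(b) = E[Z² | Z ≤ b] - (E[Z | Z ≤ b])²`, with
`E[f(Z) | Z ≤ b] = (1/Φ(b)) ∫_{-∞}^b f(z) φ(z) dz`. -/
noncomputable def truncVar (b : ℝ) : ℝ :=
  (stdCDF b)⁻¹ * (∫ z in Set.Iic b, z ^ 2 * stdPhi z)
    - ((stdCDF b)⁻¹ * (∫ z in Set.Iic b, z * stdPhi z)) ^ 2

/-!
Let `B = bΦ + φ` and `L = (1 + b²)Φ + bφ`, so that `B' = Φ` and `L' = 2B`. Integrating by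
parts, `V = K / Φ²` with `K = Φ² - Bφ`, whence `V < 1`, and `V' = 2φD / Φ²` with Sampford's
gap `D = B²/Φ - L/2`. Each of `B`, `L`, `K`, `D` tends to `0` at `-∞`, and their derivatives
`Φ`, `2B`, `φL`, `BK/Φ²` are positive as soon as the functions before them in the list are;
so all four are positive, and in particular `V' > 0`.
-/

open Real MeasureTheory Set Filter Topology

lemma pos_of_hasDerivAt_pos_of_tendsto_atBot {F f : ℝ → ℝ} (hF : ∀ x, HasDerivAt F (f x) x)
    (hf : ∀ x, 0 < f x) (hlim : Tendsto F atBot (𝓝 0)) (b : ℝ) : 0 < F b := by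
  have hmono : StrictMono F := strictMono_of_hasDerivAt_pos hF hf
  have hle : 0 ≤ F (b - 1) :=
    le_of_tendsto hlim <| (eventually_le_atBot (b - 1)).mono fun x hx => hmono.monotone hx
  linarith [hmono (sub_one_lt b)]

lemma stdPhi_pos (t : ℝ) : 0 < stdPhi t := by
  unfold stdPhi; positivity

lemma stdPhi_neg (t : ℝ) : stdPhi (-t) = stdPhi t := by
  simp only [stdPhi, neg_sq]

lemma continuous_stdPhi : Continuous stdPhi := by
  unfold stdPhi; fun_prop

lemma hasDerivAt_stdPhi (t : ℝ) : HasDerivAt stdPhi (-t * stdPhi t) t := by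
  refine HasDerivAt.congr_deriv (f := stdPhi)
    (((hasDerivAt_pow 2 t).neg.div_const 2).exp.div_const (Real.sqrt (2 * π))) ?_
  simp only [stdPhi, Pi.neg_apply]; ring

lemma pow_mul_stdPhi_eq (n : ℕ) (t : ℝ) :
    t ^ n * stdPhi t = t ^ (n : ℝ) * exp (-(1 / 2) * t ^ 2) / Real.sqrt (2 * π) := by
  rw [rpow_natCast, stdPhi]; ring_nf

lemma integrable_pow_mul_stdPhi (n : ℕ) : Integrable fun t : ℝ => t ^ n * stdPhi t := by
  simp_rw [pow_mul_stdPhi_eq]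
  exact (integrable_rpow_mul_exp_neg_mul_sq (by norm_num)
    (by linarith [n.cast_nonneg (α := ℝ)])).div_const _

lemma integrable_stdPhi : Integrable stdPhi := by
  simpa using integrable_pow_mul_stdPhi 0

lemma tendsto_pow_mul_stdPhi_atTop (n : ℕ) :
    Tendsto (fun t : ℝ => t ^ n * stdPhi t) atTop (𝓝 0) := by
  simp_rw [pow_mul_stdPhi_eq]
  have hexp : Tendsto (fun x : ℝ => exp (-(1 / 2) * x)) atTop (𝓝 0) :=
    tendsto_exp_atBot.comp <| tendsto_id.const_mul_atTop_of_neg (by norm_num)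
  simpa using ((rpow_mul_exp_neg_mul_sq_isLittleO_exp_neg (by norm_num) (n : ℝ)).isBigO
    |>.trans_tendsto hexp).div_const (Real.sqrt (2 * π))

lemma tendsto_pow_mul_stdPhi_atBot (n : ℕ) :
    Tendsto (fun t : ℝ => t ^ n * stdPhi t) atBot (𝓝 0) := by
  have h := ((tendsto_pow_mul_stdPhi_atTop n).const_mul ((-1 : ℝ) ^ n)).comp
    tendsto_neg_atBot_atTop
  rw [mul_zero] at h
  refine h.congr fun t => ?_
  simp only [Function.comp, stdPhi_neg, ← mul_assoc, ← mul_pow, neg_one_mul, neg_neg]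

lemma tendsto_stdPhi_atBot : Tendsto stdPhi atBot (𝓝 0) := by
  simpa using tendsto_pow_mul_stdPhi_atBot 0

lemma hasDerivAt_stdCDF (b : ℝ) : HasDerivAt stdCDF (stdPhi b) b := by
  have hsplit : stdCDF = fun x => stdCDF 0 + ∫ t in (0 : ℝ)..x, stdPhi t := by
    ext x
    rw [← intervalIntegral.integral_Iic_sub_Iic integrable_stdPhi.integrableOn
      integrable_stdPhi.integrableOn, stdCDF, stdCDF, add_sub_cancel]
  rw [hsplit]
  exact (intervalIntegral.integral_hasDerivAt_right integrable_stdPhi.intervalIntegrable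
    (continuous_stdPhi.stronglyMeasurableAtFilter _ _) continuous_stdPhi.continuousAt).const_add _

lemma stdCDF_pos (b : ℝ) : 0 < stdCDF b := by
  rw [stdCDF, setIntegral_pos_iff_support_of_nonneg_ae
    (Eventually.of_forall fun x => (stdPhi_pos x).le) integrable_stdPhi.integrableOn,
    Function.support_eq_univ fun x => (stdPhi_pos x).ne', univ_inter]
  simp [Real.volume_Iic]

lemma integral_Iic_mul_stdPhi (b : ℝ) : ∫ z in Iic b, z * stdPhi z = -stdPhi b := by
  have h := integral_Iic_of_hasDerivAt_of_tendsto' (f := fun z => -stdPhi z)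
    (f' := fun z => z * stdPhi z) (a := b) (m := 0)
    (fun x _ => (hasDerivAt_stdPhi x).neg.congr_deriv (by ring))
    (by simpa using (integrable_pow_mul_stdPhi 1).integrableOn)
    (by simpa using tendsto_stdPhi_atBot.neg)
  simpa using h

lemma stdCDF_le_stdPhi {b : ℝ} (hb : b ≤ -1) : stdCDF b ≤ stdPhi b := by
  have hint : IntegrableOn (fun z => -(z * stdPhi z)) (Iic b) := by
    simpa using (integrable_pow_mul_stdPhi 1).neg.integrableOn
  calc stdCDF b ≤ ∫ z in Iic b, -(z * stdPhi z) :=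
        setIntegral_mono_on integrable_stdPhi.integrableOn hint measurableSet_Iic fun x hx => by
          nlinarith [stdPhi_pos x, mem_Iic.1 hx]
    _ = stdPhi b := by rw [integral_neg, integral_Iic_mul_stdPhi, neg_neg]

lemma tendsto_pow_mul_stdCDF_atBot (n : ℕ) :
    Tendsto (fun b : ℝ => b ^ n * stdCDF b) atBot (𝓝 0) := by
  refine squeeze_zero_norm' ?_ (by simpa using (tendsto_pow_mul_stdPhi_atBot n).abs)
  filter_upwards [eventually_le_atBot (-1 : ℝ)] with x hx
  rw [norm_mul, Real.norm_eq_abs, Real.norm_eq_abs, abs_of_pos (stdCDF_pos x), abs_pow,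
    abs_of_pos (stdPhi_pos x)]
  exact mul_le_mul_of_nonneg_left (stdCDF_le_stdPhi hx) (by positivity)

lemma integral_Iic_sq_mul_stdPhi (b : ℝ) :
    ∫ z in Iic b, z ^ 2 * stdPhi z = stdCDF b - b * stdPhi b := by
  have hderiv (x : ℝ) : HasDerivAt (fun y => stdCDF y - y * stdPhi y) (x ^ 2 * stdPhi x) x :=
    ((hasDerivAt_stdCDF x).sub ((hasDerivAt_id x).mul (hasDerivAt_stdPhi x))).congr_deriv
      (by simp only [id_eq]; ring)
  have hlim : Tendsto (fun y => stdCDF y - y * stdPhi y) atBot (𝓝 0) := by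
    simpa using (tendsto_pow_mul_stdCDF_atBot 0).sub (tendsto_pow_mul_stdPhi_atBot 1)
  simpa using integral_Iic_of_hasDerivAt_of_tendsto' (fun x _ => hderiv x)
    (integrable_pow_mul_stdPhi 2).integrableOn hlim

noncomputable def cdfPrim (b : ℝ) : ℝ := b * stdCDF b + stdPhi b

noncomputable def cdfPrim2 (b : ℝ) : ℝ := (1 + b ^ 2) * stdCDF b + b * stdPhi b

noncomputable def truncVarNum (b : ℝ) : ℝ := stdCDF b ^ 2 - cdfPrim b * stdPhi b

noncomputable def sampfordGap (b : ℝ) : ℝ := cdfPrim b ^ 2 / stdCDF b - cdfPrim2 b / 2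

lemma truncVar_eq (b : ℝ) : truncVar b = truncVarNum b / stdCDF b ^ 2 := by
  have hΦ := (stdCDF_pos b).ne'
  rw [truncVar, integral_Iic_sq_mul_stdPhi, integral_Iic_mul_stdPhi, truncVarNum, cdfPrim]
  field_simp
  ring

lemma hasDerivAt_cdfPrim (b : ℝ) : HasDerivAt cdfPrim (stdCDF b) b :=
  (((hasDerivAt_id b).mul (hasDerivAt_stdCDF b)).add (hasDerivAt_stdPhi b)).congr_deriv
    (by simp only [id_eq]; ring)

lemma hasDerivAt_cdfPrim2 (b : ℝ) : HasDerivAt cdfPrim2 (2 * cdfPrim b) b := by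
  have hsq : HasDerivAt (fun x : ℝ => 1 + x ^ 2) (2 * b) b := by
    simpa using (hasDerivAt_pow 2 b).const_add 1
  exact ((hsq.mul (hasDerivAt_stdCDF b)).add ((hasDerivAt_id b).mul
    (hasDerivAt_stdPhi b))).congr_deriv (by simp only [cdfPrim, id_eq]; ring)

lemma hasDerivAt_truncVarNum (b : ℝ) : HasDerivAt truncVarNum (stdPhi b * cdfPrim2 b) b :=
  (((hasDerivAt_stdCDF b).pow 2).sub ((hasDerivAt_cdfPrim b).mul
    (hasDerivAt_stdPhi b))).congr_deriv (by simp only [cdfPrim2, cdfPrim]; ring)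

lemma hasDerivAt_sampfordGap (b : ℝ) :
    HasDerivAt sampfordGap (cdfPrim b * truncVarNum b / stdCDF b ^ 2) b := by
  have hΦ := (stdCDF_pos b).ne'
  refine ((((hasDerivAt_cdfPrim b).pow 2).div (hasDerivAt_stdCDF b) hΦ).sub
    ((hasDerivAt_cdfPrim2 b).div_const 2)).congr_deriv ?_
  simp only [truncVarNum, Pi.pow_apply]
  field_simp
  ring

lemma tendsto_cdfPrim_atBot : Tendsto cdfPrim atBot (𝓝 0) := by
  have h := (tendsto_pow_mul_stdCDF_atBot 1).add (tendsto_pow_mul_stdPhi_atBot 0)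
  simp only [pow_one, pow_zero, one_mul, add_zero] at h
  exact h

lemma tendsto_cdfPrim2_atBot : Tendsto cdfPrim2 atBot (𝓝 0) := by
  have h := ((tendsto_pow_mul_stdCDF_atBot 0).add (tendsto_pow_mul_stdCDF_atBot 2)).add
    (tendsto_pow_mul_stdPhi_atBot 1)
  simp only [add_zero] at h
  exact h.congr fun b => by simp only [cdfPrim2]; ring

lemma tendsto_truncVarNum_atBot : Tendsto truncVarNum atBot (𝓝 0) := by
  have h := ((tendsto_pow_mul_stdCDF_atBot 0).pow 2).sub
    (tendsto_cdfPrim_atBot.mul tendsto_stdPhi_atBot)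
  simp only [pow_zero, one_mul, mul_zero, sub_zero, zero_pow two_ne_zero] at h
  exact h

lemma cdfPrim_pos (b : ℝ) : 0 < cdfPrim b :=
  pos_of_hasDerivAt_pos_of_tendsto_atBot hasDerivAt_cdfPrim stdCDF_pos tendsto_cdfPrim_atBot b

lemma cdfPrim2_pos (b : ℝ) : 0 < cdfPrim2 b :=
  pos_of_hasDerivAt_pos_of_tendsto_atBot hasDerivAt_cdfPrim2
    (fun x => mul_pos two_pos (cdfPrim_pos x)) tendsto_cdfPrim2_atBot b

lemma truncVarNum_pos (b : ℝ) : 0 < truncVarNum b :=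
  pos_of_hasDerivAt_pos_of_tendsto_atBot hasDerivAt_truncVarNum
    (fun x => mul_pos (stdPhi_pos x) (cdfPrim2_pos x)) tendsto_truncVarNum_atBot b

lemma strictMono_cdfPrim_div_stdCDF : StrictMono fun b => cdfPrim b / stdCDF b := by
  refine strictMono_of_hasDerivAt_pos (fun b => ((hasDerivAt_cdfPrim b).div
    (hasDerivAt_stdCDF b) (stdCDF_pos b).ne').congr_deriv ?_)
    fun b => div_pos (truncVarNum_pos b) (pow_pos (stdCDF_pos b) 2)
  simp only [truncVarNum]
  ring

lemma tendsto_sampfordGap_atBot : Tendsto sampfordGap atBot (𝓝 0) := by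
  -- `B²/Φ = (B/Φ) B`, and `B/Φ` is increasing, hence bounded on `(-∞, 0]`
  have hsq : Tendsto (fun b => cdfPrim b ^ 2 / stdCDF b) atBot (𝓝 0) := by
    refine squeeze_zero' (Eventually.of_forall fun b => (div_pos (pow_pos (cdfPrim_pos b) 2)
      (stdCDF_pos b)).le) ?_
      (by simpa using tendsto_cdfPrim_atBot.const_mul (cdfPrim 0 / stdCDF 0))
    filter_upwards [eventually_le_atBot 0] with b hb
    rw [sq, mul_div_right_comm]
    exact mul_le_mul_of_nonneg_right (strictMono_cdfPrim_div_stdCDF.monotone hb)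
      (cdfPrim_pos b).le
  have h := hsq.sub (tendsto_cdfPrim2_atBot.div_const 2)
  simp only [zero_div, sub_zero] at h
  exact h

lemma sampfordGap_pos (b : ℝ) : 0 < sampfordGap b :=
  pos_of_hasDerivAt_pos_of_tendsto_atBot hasDerivAt_sampfordGap
    (fun x => div_pos (mul_pos (cdfPrim_pos x) (truncVarNum_pos x)) (pow_pos (stdCDF_pos x) 2))
    tendsto_sampfordGap_atBot b

lemma hasDerivAt_truncVar (b : ℝ) :
    HasDerivAt truncVar (2 * stdPhi b * sampfordGap b / stdCDF b ^ 2) b := by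
  have hΦ := (stdCDF_pos b).ne'
  rw [show truncVar = fun b => truncVarNum b / stdCDF b ^ 2 from funext truncVar_eq]
  refine ((hasDerivAt_truncVarNum b).div ((hasDerivAt_stdCDF b).pow 2)
    (pow_ne_zero 2 hΦ)).congr_deriv ?_
  simp only [sampfordGap, truncVarNum, cdfPrim2, cdfPrim, Pi.pow_apply]
  field_simp
  ring

lemma truncVar_lt_one (b : ℝ) : truncVar b < 1 := by
  rw [truncVar_eq, div_lt_one (pow_pos (stdCDF_pos b) 2), truncVarNum, sub_lt_self_iff]
  exact mul_pos (cdfPrim_pos b) (stdPhi_pos b)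

lemma strictMono_truncVar : StrictMono truncVar :=
  strictMono_of_hasDerivAt_pos hasDerivAt_truncVar fun b =>
    div_pos (mul_pos (mul_pos two_pos (stdPhi_pos b)) (sampfordGap_pos b))
      (pow_pos (stdCDF_pos b) 2)

/-- **Monotonicity of the truncated variance.** `V(b) = Var(Z | Z ≤ b)` is strictly
increasing on `ℝ` and `V(b) < 1` for all `b ≤ 0`. In particular, for every `p ∈ (0, 1/2)`,
`γ(p) = 1 - V(-c_p) > 0`, where `c_p > 0` is the unique real with `Φ(-c_p) = p`. -/
theorem stmt13 :
    StrictMono truncVar ∧ (∀ b : ℝ, b ≤ 0 → truncVar b < 1) ∧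
    (∀ p cp : ℝ, p ∈ Set.Ioo (0 : ℝ) (1 / 2) → 0 < cp → stdCDF (-cp) = p →
      0 < 1 - truncVar (-cp)) :=
  ⟨strictMono_truncVar, fun b _ => truncVar_lt_one b,
    fun _ cp _ _ _ => sub_pos.2 (truncVar_lt_one (-cp))⟩
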